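/- arXiv:2407.08695 — 11 statements merged into one kernel-verified Lean document; each statement's English description precedes it below -/
import Mathlib

section
/- For any n ≥ 1, any nonnegative integer d with d+1 ≤ n, and Boolean variables x₁,…,xₙ ∈ {0,1}: x₁ ⊕ ⋯ ⊕ xₙ ≡ Σ_{k=1}^{d+1} Σ_{α₁<⋯<α_k} (-2)^{k-1} ∏_{i=1}^{k} x_{α_i} (mod 2^{d+1}). -/
/-!
For `xᵢ ∈ {0, 1}` the product `∏ (1 - 2 xᵢ)` equals `(-1) ^ (∑ xᵢ) = 1 - 2 ((∑ xᵢ) % 2)`.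
Expanding it over subsets gives `1 + ∑_{s ≠ ∅} (-2) ^ |s| ∏_{i ∈ s} xᵢ`, so after cancelling `-2`
the parity is *exactly* the untruncated sum; the terms with `|s| > d + 1` carry a factor
`(-2) ^ (|s| - 1)` divisible by `2 ^ (d + 1)`.
-/

open Finset

theorem Int.two_pow_dvd_neg_two_pow {m n : ℕ} (h : m ≤ n) : (2 : ℤ) ^ m ∣ (-2) ^ n :=
  (pow_dvd_pow_of_dvd (Int.dvd_neg.mpr dvd_rfl) m).trans (pow_dvd_pow _ h)

theorem Int.sum_filter_modEq_sum {α : Type*} {s : Finset α} {p : α → Prop} [DecidablePred p]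
    {f : α → ℤ} {n : ℤ} (h : ∀ a ∈ s, ¬p a → n ∣ f a) :
    ∑ a ∈ s with p a, f a ≡ ∑ a ∈ s, f a [ZMOD n] := by
  rw [Int.modEq_iff_dvd, ← sum_filter_add_sum_filter_not s p, add_sub_cancel_left]
  exact dvd_sum fun a ha => h a (mem_filter.mp ha).1 (mem_filter.mp ha).2

theorem Finset.prod_one_sub_two_mul {ι R : Type*} [CommRing R] (s : Finset ι) (x : ι → R) :
    ∏ i ∈ s, (1 - 2 * x i) = ∑ t ∈ s.powerset, (-2) ^ t.card * ∏ i ∈ t, x i := by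
  simp_rw [sub_eq_add_neg, ← neg_mul, prod_one_add, prod_mul_distrib, prod_const]

theorem Finset.prod_one_sub_two_mul_of_zero_or_one {ι : Type*} [DecidableEq ι] {s : Finset ι}
    {x : ι → ℤ} (hx : ∀ i ∈ s, x i = 0 ∨ x i = 1) :
    ∏ i ∈ s, (1 - 2 * x i) = 1 - 2 * ((∑ i ∈ s, x i) % 2) := by
  induction s using Finset.induction_on with
  | empty => simp
  | insert a s ha ih =>
    rw [prod_insert ha, sum_insert ha, ih fun i hi => hx i (mem_insert_of_mem hi)]
    rcases hx a (mem_insert_self a s) with h | h <;> rw [h] <;> omega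

theorem Finset.sum_emod_two_eq_sum_powerset_nonempty {ι : Type*} [DecidableEq ι] {s : Finset ι}
    {x : ι → ℤ} (hx : ∀ i ∈ s, x i = 0 ∨ x i = 1) :
    (∑ i ∈ s, x i) % 2 = ∑ t ∈ s.powerset with t.Nonempty, (-2) ^ (t.card - 1) * ∏ i ∈ t, x i := by
  have hempty : {t ∈ s.powerset | ¬t.Nonempty} = {∅} := by
    ext t
    simp +contextual [not_nonempty_iff_eq_empty]
  have hexpand := sum_filter_add_sum_filter_not s.powerset (·.Nonempty)
    fun t => (-2 : ℤ) ^ t.card * ∏ i ∈ t, x i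
  rw [hempty, ← prod_one_sub_two_mul, prod_one_sub_two_mul_of_zero_or_one hx] at hexpand
  refine mul_left_cancel₀ (show (-2 : ℤ) ≠ 0 by norm_num) ?_
  simp only [sum_singleton, card_empty, pow_zero, prod_empty, mul_one] at hexpand
  calc -2 * ((∑ i ∈ s, x i) % 2)
      = ∑ t ∈ s.powerset with t.Nonempty, (-2) ^ t.card * ∏ i ∈ t, x i := by linarith
    _ = -2 * ∑ t ∈ s.powerset with t.Nonempty, (-2) ^ (t.card - 1) * ∏ i ∈ t, x i := by
      rw [mul_sum]
      refine sum_congr rfl fun t ht => ?_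
      rw [← mul_assoc, ← pow_succ', Nat.sub_add_cancel (mem_filter.mp ht).2.card_pos]

open Finset in
theorem stmt_3_general (n d : ℕ) (x : Fin n → ℤ)
    (hx : ∀ i, x i = 0 ∨ x i = 1) :
    (∑ i, x i) % 2 ≡
      ∑ s ∈ Finset.univ.powerset.filter
          (fun s : Finset (Fin n) => s.Nonempty ∧ s.card ≤ d + 1),
        (-2) ^ (s.card - 1) * ∏ i ∈ s, x i [ZMOD (2 ^ (d + 1))] := by
  rw [← filter_filter, sum_emod_two_eq_sum_powerset_nonempty fun i _ => hx i]
  refine (Int.sum_filter_modEq_sum fun s _ hs => ?_).symm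
  exact (Int.two_pow_dvd_neg_two_pow (by omega)).mul_right _

open Finset in
theorem stmt_3 (n d : ℕ) (hn : 1 ≤ n) (hd : d + 1 ≤ n) (x : Fin n → ℤ)
    (hx : ∀ i, x i = 0 ∨ x i = 1) :
    (∑ i, x i) % 2 ≡
      ∑ s ∈ Finset.univ.powerset.filter
          (fun s : Finset (Fin n) => s.Nonempty ∧ s.card ≤ d + 1),
        (-2) ^ (s.card - 1) * ∏ i ∈ s, x i [ZMOD (2 ^ (d + 1))] :=
  stmt_3_general n d x hx
end

section
/- For a ∈ ℤ and Boolean variables x₁,…,xₙ ∈ {0,1}: a·(x₁ ⊕ ⋯ ⊕ xₙ) ≡ a·(Σ_α x_α − 2·Σ_{α<β} x_α x_β + 4·Σ_{α<β<γ} x_α x_β x_γ) (mod 8). -/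
/-!
Only the number `k` of indices with `x i = 1` matters: the sums of products over `j`-subsets
become `k.choose j`. The parity of `k` is `(1 - (1 - 2) ^ k) / 2 = ∑ j, (-2) ^ (j - 1) * k.choose j`,
and the terms with `j ≥ 4` vanish modulo `8`.
-/

open Finset

lemma Int.emod_two_modEq_sub_choose_two_add_choose_three (k : ℕ) :
    (k : ℤ) % 2 ≡ k - 2 * k.choose 2 + 4 * k.choose 3 [ZMOD 8] := by
  induction k using Nat.twoStepInduction with
  | zero => decide
  | one => decide
  | more k ih _ =>
    have choose_two : (k + 2).choose 2 = k.choose 2 + (2 * k + 1) := by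
      simp [Nat.choose_succ_succ, Nat.choose_one_right]; omega
    have choose_three : (k + 2).choose 3 = k.choose 3 + 2 * k.choose 2 + k := by
      simp [Nat.choose_succ_succ, Nat.choose_one_right]; omega
    calc ((k + 2 : ℕ) : ℤ) % 2 = (k : ℤ) % 2 := by omega
      _ ≡ k - 2 * k.choose 2 + 4 * k.choose 3 [ZMOD 8] := ih
      _ ≡ k - 2 * k.choose 2 + 4 * k.choose 3 + 8 * k.choose 2 [ZMOD 8] :=
          (Int.add_mul_emod_self_left _ _ _).symm
      _ = ((k + 2 : ℕ) : ℤ) - 2 * (k + 2).choose 2 + 4 * (k + 2).choose 3 := by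
          rw [choose_two, choose_three]; push_cast; ring

section ZeroOne

variable {ι R : Type*} [CommSemiring R] [DecidableEq R] {s : Finset ι} {x : ι → R}

lemma eq_ite_eq_one_of_eq_zero_or_eq_one {r : R} (hr : r = 0 ∨ r = 1) :
    r = if r = 1 then 1 else 0 := by
  rcases hr with rfl | rfl <;> simp

lemma Finset.sum_eq_card_filter_eq_one (hx : ∀ i ∈ s, x i = 0 ∨ x i = 1) :
    ∑ i ∈ s, x i = #{i ∈ s | x i = 1} := by
  rw [← sum_boole]
  exact sum_congr rfl fun i hi ↦ eq_ite_eq_one_of_eq_zero_or_eq_one (hx i hi)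

lemma Finset.sum_powersetCard_prod_eq_choose (hx : ∀ i ∈ s, x i = 0 ∨ x i = 1) (m : ℕ) :
    ∑ t ∈ s.powersetCard m, ∏ i ∈ t, x i = (#{i ∈ s | x i = 1}).choose m := by
  classical
  set T := {i ∈ s | x i = 1}
  have prod_eq : ∀ t ∈ s.powersetCard m, ∏ i ∈ t, x i = if t ⊆ T then 1 else 0 := by
    intro t ht
    have hts := (mem_powersetCard.mp ht).1
    rw [prod_congr rfl fun i hi ↦ eq_ite_eq_one_of_eq_zero_or_eq_one (hx i (hts hi)), prod_boole]
    congr 1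
    simp only [T, subset_iff, mem_filter]
    exact propext ⟨fun h i hi ↦ ⟨hts hi, h i hi⟩, fun h i hi ↦ (h hi).2⟩
  have filter_eq : {t ∈ s.powersetCard m | t ⊆ T} = T.powersetCard m := by
    ext t
    simp only [mem_filter, mem_powersetCard]
    exact ⟨fun ⟨⟨_, hcard⟩, htT⟩ ↦ ⟨htT, hcard⟩,
      fun ⟨htT, hcard⟩ ↦ ⟨⟨htT.trans (filter_subset _ _), hcard⟩, htT⟩⟩
  rw [sum_congr rfl prod_eq, sum_boole, filter_eq, card_powersetCard]

end ZeroOne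

open Finset in
theorem stmt_4 (n : ℕ) (a : ℤ) (x : Fin n → ℤ)
    (hx : ∀ i, x i = 0 ∨ x i = 1) :
    a * ((∑ i, x i) % 2) ≡
      a * ((∑ i, x i)
        - 2 * ∑ s ∈ Finset.univ.powersetCard 2, ∏ i ∈ s, x i
        + 4 * ∑ s ∈ Finset.univ.powersetCard 3, ∏ i ∈ s, x i) [ZMOD 8] := by
  have hx' : ∀ i ∈ univ, x i = 0 ∨ x i = 1 := fun i _ ↦ hx i
  rw [sum_eq_card_filter_eq_one hx', sum_powersetCard_prod_eq_choose hx',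
    sum_powersetCard_prod_eq_choose hx']
  exact (Int.emod_two_modEq_sub_choose_two_add_choose_three _).mul_left a
end

section
/- Let P be an n × m matrix over 𝔽₂ (rows P_α indexed by α, columns indexed by 1..m), and let z ∈ 𝔽₂ⁿ, y ∈ 𝔽₂^m satisfy: (1) y has even Hamming weight; (2) for every α, the vector P_α ∧ y (entrywise AND) has even Hamming weight; (3) for all α < β, the vector P_α ∧ P_β ∧ y has even Hamming weight. Define P' = P ⊕ z·yᵀ (entrywise XOR with the rank-one Boolean outer product). Then for all α ≤ β ≤ γ, |P'_α ∧ P'_β ∧ P'_γ| ≡ |P_α ∧ P_β ∧ P_γ| (mod 2). -/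
/-- Hamming weight of a Boolean vector. -/
def wt {m : ℕ} (v : Fin m → Bool) : ℕ :=
  (Finset.univ.filter (fun i => v i = true)).card

open Finset

/-! Over `ZMod 2`, `b ↦ b.toNat` turns `&&` into `*` and `^^` into `+`, so `wt` becomes a sum and
the parity of `|P'_α ∧ P'_β ∧ P'_γ|` expands, using `y ∧ y = y`, into `|P_α ∧ P_β ∧ P_γ|` plus
multiples of `|y|`, `|P_δ ∧ y|` and `|P_δ ∧ P_ε ∧ y|`, all of which are even. -/

theorem natCast_wt_eq_sum {m : ℕ} (v : Fin m → Bool) :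
    (wt v : ZMod 2) = ∑ i, ((v i).toNat : ZMod 2) := by
  rw [wt, card_filter]
  push_cast
  exact sum_congr rfl fun i _ => by cases v i <;> rfl

theorem sum_toNat_eq_zero_of_wt_mod_two {m : ℕ} {v : Fin m → Bool} (h : wt v % 2 = 0) :
    ∑ i, ((v i).toNat : ZMod 2) = 0 := by
  rw [← natCast_wt_eq_sum, ZMod.natCast_eq_zero_iff]
  exact Nat.dvd_of_mod_eq_zero h

theorem wt_and_and_mod_two_eq_zero {n m : ℕ} {P : Fin n → Fin m → Bool} {y : Fin m → Bool}
    (h2 : ∀ α, wt (fun i => P α i && y i) % 2 = 0)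
    (h3 : ∀ α β, α < β → wt (fun i => P α i && P β i && y i) % 2 = 0) (α β : Fin n) :
    wt (fun i => P α i && P β i && y i) % 2 = 0 := by
  rcases lt_trichotomy α β with h | rfl | h
  · exact h3 α β h
  · simpa only [Bool.and_self] using h2 α
  · have hcomm : (fun i => P α i && P β i && y i) = (fun i => P β i && P α i && y i) :=
      funext fun i => by rw [Bool.and_comm (P α i)]
    exact hcomm ▸ h3 β α h

theorem toNat_xor_and_and (a b c u v w y : Bool) :
    (((a ^^ (u && y)) && (b ^^ (v && y)) && (c ^^ (w && y))).toNat : ZMod 2) =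
      (a && b && c).toNat + (u && v && w).toNat * y.toNat
      + (v && w).toNat * (a && y).toNat + (u && w).toNat * (b && y).toNat
      + (u && v).toNat * (c && y).toNat
      + w.toNat * (a && b && y).toNat + v.toNat * (a && c && y).toNat
      + u.toNat * (b && c && y).toNat := by
  revert a b c u v w y
  decide

theorem stmt_5 (n m : ℕ) (P : Fin n → Fin m → Bool)
    (z : Fin n → Bool) (y : Fin m → Bool)
    (h1 : wt y % 2 = 0)
    (h2 : ∀ α, wt (fun i => P α i && y i) % 2 = 0)
    (h3 : ∀ α β, α < β → wt (fun i => P α i && P β i && y i) % 2 = 0)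
    (P' : Fin n → Fin m → Bool)
    (hP' : ∀ α i, P' α i = Bool.xor (P α i) (z α && y i)) :
    ∀ α β γ : Fin n, α ≤ β → β ≤ γ →
      wt (fun i => P' α i && P' β i && P' γ i) % 2 =
      wt (fun i => P α i && P β i && P γ i) % 2 := by
  intro α β γ _ _
  have hpair := fun a b => sum_toNat_eq_zero_of_wt_mod_two (wt_and_and_mod_two_eq_zero h2 h3 a b)
  have hsingle := fun a => sum_toNat_eq_zero_of_wt_mod_two (h2 a)
  rw [← ZMod.natCast_eq_natCast_iff', natCast_wt_eq_sum, natCast_wt_eq_sum]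
  simp only [hP', toNat_xor_and_and, sum_add_distrib, ← mul_sum,
    sum_toNat_eq_zero_of_wt_mod_two h1, hsingle, hpair, mul_zero, add_zero]
end

section
/- Let P be an n × m matrix over 𝔽₂, z ∈ 𝔽₂ⁿ, y ∈ 𝔽₂^m with: (1) |y| ≡ 0 (mod 2); (2) |P_α ∧ y| ≡ 0 (mod 2) for all α; (3) |(z_α(P_β ∧ P_γ) ⊕ z_β(P_α ∧ P_γ) ⊕ z_γ(P_α ∧ P_β)) ∧ y| ≡ 0 (mod 2) for all α < β < γ. Then, with P' = P ⊕ z·yᵀ, for all α ≤ β ≤ γ we have |P'_α ∧ P'_β ∧ P'_γ| ≡ |P_α ∧ P_β ∧ P_γ| (mod 2). -/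
open Finset

theorem triple_product_add_mul_of_isIdempotentElem {R : Type*} [CommRing R]
    (a b c za zb zc u : R) (hu : IsIdempotentElem u) :
    (a + za * u) * (b + zb * u) * (c + zc * u) =
      a * b * c + (za * (b * c) + zb * (a * c) + zc * (a * b)) * u
        + za * zb * (c * u) + za * zc * (b * u) + zb * zc * (a * u) + za * zb * zc * u := by
  linear_combination (za * zb * c + za * zc * b + zb * zc * a + za * zb * zc * (u + 1)) * hu.eq

theorem sum_triple_product_add_mul_eq {R ι : Type*} [CommRing R] (s : Finset ι)
    (a b c u : ι → R) (za zb zc : R) (hu : ∀ i ∈ s, IsIdempotentElem (u i))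
    (hu0 : ∑ i ∈ s, u i = 0) (ha : ∑ i ∈ s, a i * u i = 0) (hb : ∑ i ∈ s, b i * u i = 0)
    (hc : ∑ i ∈ s, c i * u i = 0)
    (habc : ∑ i ∈ s, (za * (b i * c i) + zb * (a i * c i) + zc * (a i * b i)) * u i = 0) :
    ∑ i ∈ s, (a i + za * u i) * (b i + zb * u i) * (c i + zc * u i) =
      ∑ i ∈ s, a i * b i * c i := by
  rw [sum_congr rfl fun i hi => triple_product_add_mul_of_isIdempotentElem _ _ _ _ _ _ _ (hu i hi)]
  simp only [sum_add_distrib, ← mul_sum, ha, hb, hc, habc, hu0]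
  ring

theorem sum_cubic_mul_eq_zero_of_le {R ι κ : Type*} [CommRing R] [CharP R 2] [LinearOrder ι]
    (s : Finset κ) (p : ι → κ → R) (z : ι → R) (u : κ → R)
    (hp : ∀ α i, IsIdempotentElem (p α i)) (hlin : ∀ α, ∑ i ∈ s, p α i * u i = 0)
    (hcub : ∀ α β γ, α < β → β < γ →
      ∑ i ∈ s,
        (z α * (p β i * p γ i) + z β * (p α i * p γ i) + z γ * (p α i * p β i)) * u i = 0)
    {α β γ : ι} (hαβ : α ≤ β) (hβγ : β ≤ γ) :
    ∑ i ∈ s,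
      (z α * (p β i * p γ i) + z β * (p α i * p γ i) + z γ * (p α i * p β i)) * u i = 0 := by
  rcases hαβ.eq_or_lt with rfl | hαβ
  · simp only [(hp _ _).eq, CharTwo.add_self_eq_zero, zero_add, mul_assoc, ← mul_sum, hlin,
      mul_zero]
  rcases hβγ.eq_or_lt with rfl | hβγ
  · simp only [(hp _ _).eq, add_assoc, CharTwo.add_self_eq_zero, add_zero, mul_assoc, ← mul_sum,
      hlin, mul_zero]
  exact hcub α β γ hαβ hβγ

def Bool.toZMod2 (b : Bool) : ZMod 2 := cond b 1 0

namespace Bool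

@[simp] theorem toZMod2_and (a b : Bool) : (a && b).toZMod2 = a.toZMod2 * b.toZMod2 := by
  cases a <;> cases b <;> decide

@[simp] theorem toZMod2_xor (a b : Bool) : (a ^^ b).toZMod2 = a.toZMod2 + b.toZMod2 := by
  cases a <;> cases b <;> decide

theorem isIdempotentElem_toZMod2 (a : Bool) : IsIdempotentElem a.toZMod2 := by
  cases a <;> unfold IsIdempotentElem <;> decide

end Bool

theorem natCast_wt {m : ℕ} (v : Fin m → Bool) : (wt v : ZMod 2) = ∑ i, (v i).toZMod2 := by
  rw [wt, card_filter, Nat.cast_sum]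
  exact sum_congr rfl fun i _ => by cases v i <;> rfl

theorem wt_mod_two_eq_iff {m : ℕ} (v w : Fin m → Bool) :
    wt v % 2 = wt w % 2 ↔ ∑ i, (v i).toZMod2 = ∑ i, (w i).toZMod2 := by
  rw [← natCast_wt, ← natCast_wt, ZMod.natCast_eq_natCast_iff']

theorem wt_mod_two_eq_zero_iff {m : ℕ} (v : Fin m → Bool) :
    wt v % 2 = 0 ↔ ∑ i, (v i).toZMod2 = 0 := by
  rw [← natCast_wt, ZMod.natCast_eq_zero_iff, Nat.dvd_iff_mod_eq_zero]

theorem stmt_6 (n m : ℕ) (P : Fin n → Fin m → Bool)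
    (z : Fin n → Bool) (y : Fin m → Bool)
    (h1 : wt y % 2 = 0)
    (h2 : ∀ α, wt (fun i => P α i && y i) % 2 = 0)
    (h3 : ∀ α β γ : Fin n, α < β → β < γ →
      wt (fun i =>
        (Bool.xor (Bool.xor (z α && (P β i && P γ i)) (z β && (P α i && P γ i)))
          (z γ && (P α i && P β i))) && y i) % 2 = 0)
    (P' : Fin n → Fin m → Bool)
    (hP' : ∀ α i, P' α i = Bool.xor (P α i) (z α && y i)) :
    ∀ α β γ : Fin n, α ≤ β → β ≤ γ →
      wt (fun i => P' α i && P' β i && P' γ i) % 2 =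
      wt (fun i => P α i && P β i && P γ i) % 2 := by
  intro α β γ hαβ hβγ
  simp only [wt_mod_two_eq_zero_iff, Bool.toZMod2_and, Bool.toZMod2_xor] at h1 h2 h3
  rw [wt_mod_two_eq_iff]
  simp only [hP', Bool.toZMod2_and, Bool.toZMod2_xor]
  have hcub := sum_cubic_mul_eq_zero_of_le _ _ _ _
    (fun α i => (P α i).isIdempotentElem_toZMod2) h2 h3 hαβ hβγ
  exact sum_triple_product_add_mul_eq _ _ _ _ _ _ _ _
    (fun i _ => (y i).isIdempotentElem_toZMod2) h1 (h2 α) (h2 β) (h2 γ) hcub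
end

section
/- Let d ≥ 0, let P be an n × m matrix over 𝔽₂, and let z ∈ 𝔽₂ⁿ, y ∈ 𝔽₂^m satisfy |y| ≡ 0 (mod 2) and |P_{α₁} ∧ ⋯ ∧ P_{α_d} ∧ y| ≡ 0 (mod 2) for all index tuples α₁ ≤ ⋯ ≤ α_d. Then P' = P ⊕ z·yᵀ satisfies |P'_{α₁} ∧ ⋯ ∧ P'_{α_{d+1}}| ≡ |P_{α₁} ∧ ⋯ ∧ P_{α_{d+1}}| (mod 2) for all α₁ ≤ ⋯ ≤ α_{d+1}. -/
/-!
Fix `α` and count modulo 2. Columns with `y i = false` are the same in `P` and `P'`. On a column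
with `y i = true` the entries are `P (α j) i + z (α j)`, and expanding `∏ j, (P (α j) i + z (α j))`
over subsets `T` of the indices, a proper subset `T` contributes `∏ j ∉ T, z (α j)` times the
parity of `|y ∧ ⋀_{j ∈ T} P_{α j}|`. That parity is even: the at most `d` rows `α '' T` can be
padded to a monotone `d`-tuple by repeating the largest one, and `T = ∅` is `|y|` even. Only
`T = univ` survives.
-/

open Finset

theorem Finset.exists_monotone_fin_range_eq {ι : Type*} [LinearOrder ι] {d : ℕ} (T : Finset ι)
    (hT : T.Nonempty) (hTd : #T ≤ d) :
    ∃ β : Fin d → ι, Monotone β ∧ Set.range β = T := by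
  have hpos := hT.card_pos
  let clamp : Fin d → Fin #T := fun j => ⟨min j (#T - 1), by omega⟩
  refine ⟨T.orderEmbOfFin rfl ∘ clamp,
    (T.orderEmbOfFin rfl).monotone.comp fun j k hjk => by simp only [clamp, Fin.mk_le_mk]; omega,
    ?_⟩
  have hclamp : Function.Surjective clamp := fun k =>
    ⟨⟨k, by omega⟩, by ext; simp only [clamp]; omega⟩
  rw [Set.range_comp, hclamp.range_eq, Set.image_univ, T.range_orderEmbOfFin]

theorem Finset.sum_prod_add_eq_of_sum_prod_ssubset_eq_zero {J κ R : Type*} [Fintype J]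
    [DecidableEq J] [CommSemiring R] (A : Finset κ) (q : J → κ → R) (c : J → R)
    (h : ∀ T ⊂ univ, ∑ i ∈ A, ∏ j ∈ T, q j i = 0) :
    ∑ i ∈ A, ∏ j, (q j i + c j) = ∑ i ∈ A, ∏ j, q j i := by
  simp_rw [prod_add, Finset.sum_comm (s := A), ← sum_mul]
  rw [sum_eq_single_of_mem univ (mem_powerset_self _)
    fun T hT hne => by rw [h T (ssubset_univ_iff.mpr hne), zero_mul]]
  simp

theorem Finset.natCast_card_filter_forall_mem {J κ R : Type*} [CommSemiring R] (A : Finset κ)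
    (S : Finset J) (g : J → κ → Bool) :
    (#{i ∈ A | ∀ j ∈ S, g j i = true} : R) = ∑ i ∈ A, ∏ j ∈ S, if g j i then 1 else 0 := by
  simp only [prod_boole, natCast_card_filter]

theorem card_filter_forall_mem_mod_two_eq_zero_of_card_le {ι κ : Type*} [LinearOrder ι]
    [Fintype κ] {d : ℕ} (P : ι → κ → Bool) (y : κ → Bool) (h1 : #{i | y i = true} % 2 = 0)
    (h2 : ∀ α : Fin d → ι, Monotone α → #{i | y i = true ∧ ∀ j, P (α j) i = true} % 2 = 0)
    {J : Type*} (α : J → ι) (S : Finset J) (hS : #S ≤ d) :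
    #{i | y i = true ∧ ∀ j ∈ S, P (α j) i = true} % 2 = 0 := by
  obtain rfl | hne := S.eq_empty_or_nonempty
  · simpa using h1
  obtain ⟨β, hβ, hrange⟩ :=
    (S.image α).exists_monotone_fin_range_eq (hne.image α) (card_image_le.trans hS)
  convert h2 β hβ using 6 with i
  rw [← Set.forall_mem_range (p := fun a => P a i = true), hrange, coe_image,
    Set.forall_mem_image]
  rfl

theorem card_filter_forall_xor_and_mod_two {J κ : Type*} [Fintype J] [Fintype κ]
    (p : J → κ → Bool) (c : J → Bool) (y : κ → Bool)
    (h : ∀ S ⊂ univ, #{i | y i = true ∧ ∀ j ∈ S, p j i = true} % 2 = 0) :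
    #{i | ∀ j, (p j i ^^ (c j && y i)) = true} % 2 = #{i | ∀ j, p j i = true} % 2 := by
  classical
  let ind (b : Bool) : ZMod 2 := if b then 1 else 0
  have card_eq_sum_prod (q : J → κ → Bool) :
      (#{i | ∀ j, q j i = true} : ZMod 2) = ∑ i, ∏ j, ind (q j i) := by
    simpa using natCast_card_filter_forall_mem univ univ q
  have ind_xor (a b : Bool) : ind (a ^^ b) = ind a + ind b := by
    cases a <;> cases b <;> decide
  have sum_prod_ssubset (S : Finset J) (hS : S ⊂ univ) :
      ∑ i with y i = true, ∏ j ∈ S, ind (p j i) = 0 := by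
    rw [← natCast_card_filter_forall_mem, filter_filter, ← ZMod.natCast_mod, h S hS,
      Nat.cast_zero]
  rw [← ZMod.natCast_eq_natCast_iff', card_eq_sum_prod, card_eq_sum_prod,
    ← sum_filter_add_sum_filter_not univ (fun i => y i = true),
    ← sum_filter_add_sum_filter_not univ (fun i => y i = true) (fun i => ∏ j, ind (p j i))]
  congr 1
  · calc ∑ i with y i = true, ∏ j, ind (p j i ^^ (c j && y i))
        = ∑ i with y i = true, ∏ j, (ind (p j i) + ind (c j)) :=
          sum_congr rfl fun i hi => by simp only [(mem_filter.mp hi).2, Bool.and_true, ind_xor]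
      _ = _ := sum_prod_add_eq_of_sum_prod_ssubset_eq_zero _ _ _ sum_prod_ssubset
  · exact sum_congr rfl fun i hi => by simp [(mem_filter.mp hi).2]

theorem stmt_7 (d n m : ℕ) (P : Fin n → Fin m → Bool)
    (z : Fin n → Bool) (y : Fin m → Bool)
    (h1 : (Finset.univ.filter (fun i => y i = true)).card % 2 = 0)
    (h2 : ∀ α : Fin d → Fin n, Monotone α →
      (Finset.univ.filter
        (fun i => y i = true ∧ ∀ j, P (α j) i = true)).card % 2 = 0)
    (P' : Fin n → Fin m → Bool)
    (hP' : ∀ α i, P' α i = Bool.xor (P α i) (z α && y i)) :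
    ∀ α : Fin (d + 1) → Fin n, Monotone α →
      (Finset.univ.filter (fun i => ∀ j, P' (α j) i = true)).card % 2 =
      (Finset.univ.filter (fun i => ∀ j, P (α j) i = true)).card % 2 := by
  intro α _
  convert card_filter_forall_xor_and_mod_two (fun j => P (α j)) (fun j => z (α j)) y fun S hS =>
    card_filter_forall_mem_mod_two_eq_zero_of_card_le P y h1 h2 α S
      (by simpa using card_lt_card hS)
  apply hP'
end

section
/- For every n × m matrix P over 𝔽₂ there exists an n × m' matrix P' over 𝔽₂ with m' ≤ n(n+1)/2 + 1 such that |P'_α ∧ P'_β ∧ P'_γ| ≡ |P_α ∧ P_β ∧ P_γ| (mod 2) for all α ≤ β ≤ γ. -/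
/-!
Write the columns of `P` as vectors `v ∈ 𝔽₂ⁿ`, so that the tensor is `∑ v ⊗ v ⊗ v`. Fix a row `i`;
the columns with `vᵢ = 1` are `b + eᵢ` for vectors `b` vanishing at `i`. Over `𝔽₂`,
`∑ (b + eᵢ)^⊗3 - ∑ b^⊗3` depends only on the Gram matrix `∑ b bᵀ` and on the parity of the number
of `b`'s. By Lempel's symmetric elimination the same Gram matrix and parity are realised by at most
`n` vectors `a` vanishing at `i` (`n + 1` in one degenerate case), and replacing the columns
`b + eᵢ` by `a + eᵢ` leaves an error `∑ b^⊗3 + ∑ a^⊗3` supported on the other `n - 1` rows, to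
which the same step applies. This costs `n + (n - 1) + ⋯ + 1` columns. The degenerate case needs
`n` odd and `∑ v vᵀ = 0`; a suitable choice of the next pivot, or else a tensor that is constant
and hence a single column, keeps it from recurring, so the extra column is paid at most once.
-/

open Matrix Function

namespace F2Tensor

variable {ι : Type*}

lemma zmod2_mul_self (a : ZMod 2) : a * a = a := by
  rw [← sq, ZMod.pow_card]

def gram (A : List (ι → ZMod 2)) : Matrix ι ι (ZMod 2) :=
  (A.map fun a => vecMulVec a a).sum

/-- For the columns `L` of `P`, `cube L α β γ = |P_α ∧ P_β ∧ P_γ| mod 2`. -/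
def cube (L : List (ι → ZMod 2)) (x y z : ι) : ZMod 2 :=
  (L.map fun v => v x * v y * v z).sum

@[simp] lemma gram_nil : gram ([] : List (ι → ZMod 2)) = 0 := rfl

@[simp] lemma gram_cons (a : ι → ZMod 2) (A : List (ι → ZMod 2)) :
    gram (a :: A) = vecMulVec a a + gram A := by
  simp [gram]

lemma gram_append (A B : List (ι → ZMod 2)) : gram (A ++ B) = gram A + gram B := by
  simp [gram]

lemma gram_perm {A B : List (ι → ZMod 2)} (h : A.Perm B) : gram A = gram B :=
  (h.map _).sum_eq

lemma gram_apply (A : List (ι → ZMod 2)) (x y : ι) :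
    gram A x y = (A.map fun a => a x * a y).sum := by
  induction A with
  | nil => rfl
  | cons a A ih => simp [ih, vecMulVec_apply]

lemma gram_isSymm (A : List (ι → ZMod 2)) : (gram A).IsSymm := by
  induction A with
  | nil => exact isSymm_zero
  | cons a A ih => exact IsSymm.add (transpose_vecMulVec a a) ih

@[simp] lemma cube_nil : cube ([] : List (ι → ZMod 2)) = 0 := rfl

@[simp] lemma cube_cons (v : ι → ZMod 2) (L : List (ι → ZMod 2)) (x y z : ι) :
    cube (v :: L) x y z = v x * v y * v z + cube L x y z := by
  simp [cube]

lemma cube_append (L₁ L₂ : List (ι → ZMod 2)) : cube (L₁ ++ L₂) = cube L₁ + cube L₂ := by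
  funext x y z
  simp [cube]

lemma cube_perm {L₁ L₂ : List (ι → ZMod 2)} (h : L₁.Perm L₂) : cube L₁ = cube L₂ := by
  funext x y z
  exact (h.map _).sum_eq

lemma cube_swap_left (L : List (ι → ZMod 2)) (x y z : ι) : cube L x y z = cube L y x z :=
  congrArg List.sum (List.map_congr_left fun _ _ => by ring)

lemma cube_swap_right (L : List (ι → ZMod 2)) (x y z : ι) : cube L x y z = cube L x z y :=
  congrArg List.sum (List.map_congr_left fun _ _ => by ring)

lemma cube_self_left (L : List (ι → ZMod 2)) (x y : ι) : cube L x x y = gram L x y := by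
  simp only [cube, gram_apply, zmod2_mul_self]

lemma cube_eq_zero_of_notMem {L : List (ι → ZMod 2)} {V : Finset ι}
    (hL : ∀ v ∈ L, support v ⊆ V) {x : ι} (hx : x ∉ V) (y z : ι) : cube L x y z = 0 :=
  List.sum_eq_zero fun _ h => by
    obtain ⟨v, hv, rfl⟩ := List.mem_map.1 h
    rw [Function.support_subset_iff'.1 (hL v hv) x hx, zero_mul, zero_mul]

lemma gram_eq_zero_of_notMem {L : List (ι → ZMod 2)} {V : Finset ι}
    (hL : ∀ v ∈ L, support v ⊆ V) {x : ι} (hx : x ∉ V) (y : ι) : gram L x y = 0 := by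
  rw [← cube_self_left, cube_eq_zero_of_notMem hL hx]

lemma cube_eq_gram_of_forall_apply_eq_one {W : List (ι → ZMod 2)} {i : ι}
    (hW : ∀ w ∈ W, w i = 1) (x y : ι) : cube W i x y = gram W x y := by
  rw [cube, gram_apply]
  exact congrArg List.sum (List.map_congr_left fun w hw => by rw [hW w hw, one_mul])

lemma cube_map_add (A : List (ι → ZMod 2)) (e : ι → ZMod 2) (x y z : ι) :
    cube (A.map (· + e)) x y z = cube A x y z + e x * gram A y z + e y * gram A x z +
      e z * gram A x y + e x * e y * gram A z z + e x * e z * gram A y y +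
      e y * e z * gram A x x + e x * e y * e z * A.length := by
  induction A with
  | nil => simp
  | cons a A ih =>
    simp only [List.map_cons, cube_cons, ih, gram_cons, Matrix.add_apply, vecMulVec_apply,
      Pi.add_apply, zmod2_mul_self, List.length_cons, Nat.cast_succ]
    ring

lemma cube_map_add_sub_cube {A B : List (ι → ZMod 2)} (hg : gram A = gram B)
    (hl : A.length ≡ B.length [MOD 2]) (e : ι → ZMod 2) :
    cube (A.map (· + e)) - cube A = cube (B.map (· + e)) - cube B := by
  funext x y z
  simp only [Pi.sub_apply, cube_map_add, hg, (ZMod.natCast_eq_natCast_iff _ _ _).2 hl]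
  ring

/-- Three squares absorb the hyperbolic pair `u vᵀ + v uᵀ` into the square `e eᵀ`. -/
lemma vecMulVec_self_add_hyperbolic (e u v : ι → ZMod 2) :
    vecMulVec (e + u) (e + u) + vecMulVec (e + v) (e + v) + vecMulVec (e + u + v) (e + u + v) =
      vecMulVec e e + (vecMulVec u v + vecMulVec v u) := by
  ext x y
  simp only [Matrix.add_apply, vecMulVec_apply, Pi.add_apply]
  ring_nf
  reduce_mod_char

section Lempel

variable [DecidableEq ι] {M : Matrix ι ι (ZMod 2)} {V : Finset ι}

lemma sub_vecMulVec_row_eq_zero (hM : M.IsSymm) (hMV : ∀ x y, x ∉ V → M x y = 0) {i : ι}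
    (hi : M i i = 1) {x : ι} (hx : x ∉ V.erase i) (y : ι) :
    (M - vecMulVec (M i) (M i)) x y = 0 := by
  rw [Matrix.sub_apply, vecMulVec_apply]
  by_cases hxi : x = i
  · rw [hxi, hi, one_mul, sub_self]
  · have hxV : x ∉ V := fun h => hx (Finset.mem_erase.2 ⟨hxi, h⟩)
    simp [hM.apply x i, hMV x _ hxV]

lemma sub_vecMulVec_pair_eq_zero (hM : M.IsSymm) (hMV : ∀ x y, x ∉ V → M x y = 0)
    (hdiag : ∀ x, M x x = 0) {x₀ y₀ : ι} (h : M x₀ y₀ = 1) {x : ι}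
    (hx : x ∉ (V.erase x₀).erase y₀) (y : ι) :
    (M - (vecMulVec (M y₀) (M x₀) + vecMulVec (M x₀) (M y₀))) x y = 0 := by
  simp only [Matrix.sub_apply, Matrix.add_apply, vecMulVec_apply]
  by_cases hxy : x = y₀
  · simp [hxy, hdiag, h]
  by_cases hxx : x = x₀
  · simp [hxx, hdiag, hM.apply x₀ y₀, h]
  · have hxV : x ∉ V := fun hV => hx (Finset.mem_erase.2 ⟨hxy, Finset.mem_erase.2 ⟨hxx, hV⟩⟩)
    simp [hM.apply x y₀, hM.apply x x₀, hMV x _ hxV]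

/-- Symmetric elimination: a nonzero diagonal entry splits off one square, otherwise a hyperbolic
pair is split off and absorbed into the square `e eᵀ`. -/
theorem exists_gram_eq_vecMulVec_add (V : Finset ι) :
    ∀ M : Matrix ι ι (ZMod 2), M.IsSymm → (∀ x y, x ∉ V → M x y = 0) → ∀ e : ι → ZMod 2,
      ∃ A, gram A = vecMulVec e e + M ∧ A.length ≤ V.card + 1 ∧
        ((∀ x, M x x = 0) → Odd A.length) := by
  induction V using Finset.strongInduction with
  | H V ih =>
  intro M hM hMV e
  by_cases hM0 : M = 0
  · exact ⟨[e], by simp [hM0], by simp, fun _ => odd_one⟩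
  by_cases hdiag : ∃ i, M i i ≠ 0
  · obtain ⟨i, hi⟩ := hdiag
    have hiV : i ∈ V := by_contra fun h => hi (hMV i i h)
    obtain ⟨A, hA, hlen, -⟩ := ih _ (Finset.erase_ssubset hiV) (M - vecMulVec (M i) (M i))
      (hM.sub (transpose_vecMulVec _ _))
      (fun x y hx => sub_vecMulVec_row_eq_zero hM hMV (Fin.eq_one_of_ne_zero _ hi) hx y) e
    refine ⟨M i :: A, by rw [gram_cons, hA]; abel, ?_, fun h => absurd (h i) hi⟩
    have := Finset.card_erase_add_one hiV
    simp only [List.length_cons]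
    omega
  simp only [ne_eq, not_exists, not_not] at hdiag
  obtain ⟨x₀, y₀, h⟩ : ∃ x₀ y₀, M x₀ y₀ = 1 := by
    by_contra! h
    exact hM0 (Matrix.ext fun x y => by_contra fun h' => h x y (Fin.eq_one_of_ne_zero _ h'))
  have hx₀ : x₀ ∈ V := by_contra fun hx => by simp [hMV x₀ y₀ hx] at h
  have hy₀ : y₀ ∈ V.erase x₀ := by
    refine Finset.mem_erase.2 ⟨fun hxy => ?_, by_contra fun hy => ?_⟩
    · rw [hxy, hdiag] at h; exact zero_ne_one h
    · rw [← hM.apply, hMV y₀ x₀ hy] at h; exact zero_ne_one h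
  set u := M y₀
  set v := M x₀
  obtain ⟨A, hA, hlen, hodd⟩ := ih _ ((Finset.erase_ssubset hy₀).trans (Finset.erase_ssubset hx₀))
    (M - (vecMulVec u v + vecMulVec v u))
    (hM.sub (by rw [IsSymm, transpose_add, transpose_vecMulVec, transpose_vecMulVec, add_comm]))
    (fun x y hx => sub_vecMulVec_pair_eq_zero hM hMV hdiag h hx y) (e + u + v)
  refine ⟨(e + u) :: (e + v) :: A, ?_, ?_, fun _ => ?_⟩
  · rw [gram_cons, gram_cons, hA, ← add_assoc, ← add_assoc, vecMulVec_self_add_hyperbolic]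
    abel
  · have := Finset.card_erase_add_one hy₀
    have := Finset.card_erase_add_one hx₀
    simp only [List.length_cons]
    omega
  · refine (hodd fun x => ?_).add_even even_two
    simp only [Matrix.sub_apply, Matrix.add_apply, vecMulVec_apply, hdiag, mul_comm (u x)]
    rw [CharTwo.add_self_eq_zero, sub_zero]

theorem exists_gram_eq_length_le (hM : M.IsSymm) (hMV : ∀ x y, x ∉ V → M x y = 0) :
    ∃ A, gram A = M ∧ A.length ≤ V.card + 1 ∧ ((∃ x, M x x ≠ 0) → A.length ≤ V.card) ∧
      ((∀ x, M x x = 0) → Odd A.length) := by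
  by_cases hdiag : ∃ i, M i i ≠ 0
  · obtain ⟨i, hi⟩ := hdiag
    have hiV : i ∈ V := by_contra fun h => hi (hMV i i h)
    obtain ⟨A, hA, hlen, -⟩ := exists_gram_eq_vecMulVec_add (V.erase i)
      (M - vecMulVec (M i) (M i)) (hM.sub (transpose_vecMulVec _ _))
      (fun x y hx => sub_vecMulVec_row_eq_zero hM hMV (Fin.eq_one_of_ne_zero _ hi) hx y) (M i)
    have := Finset.card_erase_add_one hiV
    exact ⟨A, by rw [hA, add_sub_cancel], by omega, fun _ => by omega, fun h => absurd (h i) hi⟩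
  · obtain ⟨A, hA, hlen, hodd⟩ := exists_gram_eq_vecMulVec_add V M hM hMV 0
    exact ⟨A, by rw [hA, vecMulVec_zero, zero_add], hlen, fun h => absurd h hdiag, hodd⟩

lemma gram_map_indicator {A : List (ι → ZMod 2)} (hA : ∀ x y, x ∉ V → gram A x y = 0) :
    gram (A.map (Set.indicator ↑V)) = gram A := by
  ext x y
  by_cases hy : y ∉ V
  · rw [← (gram_isSymm A).apply, hA y x hy, gram_apply]
    simp [Function.comp_def, Set.indicator_apply, hy]
  by_cases hx : x ∉ V
  · rw [hA x y hx, gram_apply]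
    simp [Function.comp_def, Set.indicator_apply, hx]
  · simp_all [gram_apply, Function.comp_def]

theorem exists_gram_eq (hM : M.IsSymm) (hMV : ∀ x y, x ∉ V → M x y = 0) (N : ℕ) :
    ∃ A : List (ι → ZMod 2), (∀ a ∈ A, support a ⊆ V) ∧ gram A = M ∧ A.length ≡ N [MOD 2] ∧
      A.length ≤ V.card + 2 ∧ (Odd V.card ∨ Odd N ∨ (∃ x, M x x ≠ 0) → A.length ≤ V.card + 1) := by
  suffices ∃ A : List (ι → ZMod 2), gram A = M ∧ A.length ≡ N [MOD 2] ∧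
      A.length ≤ V.card + 2 ∧ (Odd V.card ∨ Odd N ∨ (∃ x, M x x ≠ 0) → A.length ≤ V.card + 1) by
    obtain ⟨A, hA, hpar, hlen, hlen'⟩ := this
    refine ⟨A.map (Set.indicator ↑V), ?_, ?_, by rwa [List.length_map], by rwa [List.length_map],
      by rwa [List.length_map]⟩
    · simp only [List.mem_map]
      rintro _ ⟨a, -, rfl⟩
      exact Set.support_indicator_subset
    · rw [gram_map_indicator (hA ▸ hMV), hA]
  obtain ⟨A, hA, hlen, hdiag, hodd⟩ := exists_gram_eq_length_le hM hMV
  by_cases hpar : A.length ≡ N [MOD 2]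
  · exact ⟨A, hA, hpar, by omega, fun _ => by omega⟩
  unfold Nat.ModEq at hpar
  refine ⟨0 :: A, by simp [hA], ?_, by simp only [List.length_cons]; omega, fun h => ?_⟩
  · unfold Nat.ModEq
    simp only [List.length_cons]
    omega
  simp only [List.length_cons]
  by_cases hM : ∃ x, M x x ≠ 0
  · have := hdiag hM
    omega
  simp only [ne_eq, not_exists, not_not] at hM
  have hA := Nat.odd_iff.1 (hodd hM)
  rcases h with h | h | ⟨x, hx⟩
  · rw [Nat.odd_iff] at h; omega
  · rw [Nat.odd_iff] at h; omega
  · exact absurd (hM x) hx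

end Lempel

section Compression

variable [DecidableEq ι] {V : Finset ι} {L : List (ι → ZMod 2)} {i : ι}

lemma support_subset_erase {v : ι → ZMod 2} (hv : support v ⊆ V) (hvi : v i = 0) :
    support v ⊆ ↑(V.erase i) := by
  rw [Finset.coe_erase]
  exact Set.subset_sdiff_singleton hv (Function.notMem_support.2 hvi)

lemma support_add_single_subset {v : ι → ZMod 2} (hv : support v ⊆ V) (hi : i ∈ V) :
    support (v + Pi.single i 1) ⊆ V :=
  (Function.support_add _ _).trans
    (Set.union_subset hv (Pi.support_single_subset.trans (Set.singleton_subset_iff.2 hi)))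

lemma exists_perm_append_map_add_single (hL : ∀ v ∈ L, support v ⊆ V) (i : ι) :
    ∃ L₀ B : List (ι → ZMod 2), (∀ v ∈ L₀, support v ⊆ V.erase i) ∧
      (∀ b ∈ B, support b ⊆ V.erase i) ∧ L.Perm (L₀ ++ B.map (· + Pi.single i 1)) := by
  induction L with
  | nil => exact ⟨[], [], by simp, by simp, by simp⟩
  | cons v L ih =>
    obtain ⟨L₀, B, hL₀, hB, hperm⟩ := ih fun w hw => hL w (List.mem_cons_of_mem v hw)
    have hv := hL v List.mem_cons_self
    by_cases hvi₀ : v i = 0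
    · exact ⟨v :: L₀, B, List.forall_mem_cons.2 ⟨support_subset_erase hv hvi₀, hL₀⟩, hB,
        hperm.cons v⟩
    have hvi : v i = 1 := Fin.eq_one_of_ne_zero _ hvi₀
    refine ⟨L₀, (v + Pi.single i 1) :: B, hL₀, List.forall_mem_cons.2 ⟨?_, hB⟩, ?_⟩
    · refine support_subset_erase (support_add_single_subset hv (hv (by simp [hvi]))) ?_
      rw [Pi.add_apply, hvi, Pi.single_eq_same, CharTwo.add_self_eq_zero]
    · have : v + Pi.single i 1 + Pi.single i 1 = v :=
        funext fun x => CharTwo.add_cancel_right _ _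
      rw [List.map_cons, this]
      exact (hperm.cons v).trans List.perm_middle.symm

lemma gram_map_add_single_apply {B : List (ι → ZMod 2)} (hB : ∀ b ∈ B, support b ⊆ V.erase i)
    (x : ι) :
    gram (B.map (· + Pi.single i 1)) i x =
      gram B x x + (Pi.single i 1 : ι → ZMod 2) x * B.length := by
  have hi : i ∉ V.erase i := Finset.notMem_erase i V
  rw [← cube_self_left, cube_map_add]
  simp [cube_eq_zero_of_notMem hB hi, gram_eq_zero_of_notMem hB hi]

theorem exists_cube_eq_add_cube_erase (hL : ∀ v ∈ L, support v ⊆ V) (hi : i ∈ V) :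
    ∃ A R : List (ι → ZMod 2), (∀ a ∈ A, support a ⊆ V) ∧ (∀ v ∈ R, support v ⊆ V.erase i) ∧
      cube L = cube A + cube R ∧ (∀ x y, gram R x y = gram L x y + cube L i x y) ∧
      A.length ≤ V.card + 1 ∧ (Even V.card ∨ gram L i ≠ 0 → A.length ≤ V.card) := by
  obtain ⟨L₀, B, hL₀, hB, hperm⟩ := exists_perm_append_map_add_single hL i
  set e : ι → ZMod 2 := Pi.single i 1
  have hiV : i ∉ V.erase i := Finset.notMem_erase i V
  have hW : ∀ w ∈ B.map (· + e), w i = 1 := by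
    simp only [List.mem_map]
    rintro _ ⟨b, hb, rfl⟩
    simp [Function.support_subset_iff'.1 (hB b hb) i hiV, e]
  obtain ⟨A, hA, hgram, hpar, hlen, hlen'⟩ := exists_gram_eq (V := V.erase i) (gram_isSymm B)
    (fun x y hx => gram_eq_zero_of_notMem hB hx y) B.length
  have hcard : (V.erase i).card + 1 = V.card := Finset.card_erase_add_one hi
  refine ⟨A.map (· + e), L₀ ++ B ++ A, ?_, ?_, ?_, fun x y => ?_, ?_, fun h => ?_⟩
  · simp only [List.mem_map]
    rintro _ ⟨a, ha, rfl⟩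
    exact support_add_single_subset ((hA a ha).trans (by simp)) hi
  · simp only [List.mem_append]
    rintro v ((hv | hv) | hv)
    exacts [hL₀ v hv, hB v hv, hA v hv]
  · -- over `𝔽₂`, `cube (B.map (· + e)) = cube (A.map (· + e)) + cube B + cube A`
    have h := cube_map_add_sub_cube hgram hpar e
    rw [cube_perm hperm, cube_append, cube_append, cube_append]
    funext x y z
    have := congrFun (congrFun (congrFun h x) y) z
    simp only [Pi.add_apply, Pi.sub_apply, CharTwo.sub_eq_add] at this ⊢
    rw [eq_comm, CharTwo.add_eq_iff_eq_add] at this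
    rw [this]
    ring
  · rw [gram_perm hperm, cube_perm hperm, gram_append, gram_append, gram_append, cube_append,
      hgram]
    simp only [Matrix.add_apply, Pi.add_apply]
    rw [cube_eq_gram_of_forall_apply_eq_one hW, cube_eq_zero_of_notMem hL₀ hiV, zero_add,
      CharTwo.add_cancel_right, CharTwo.add_cancel_right]
  · rw [List.length_map]
    omega
  rw [List.length_map, ← hcard]
  refine hlen' (h.imp (fun h => ?_) fun h => ?_)
  · rw [← hcard, Nat.even_add_one, Nat.not_even_iff_odd] at h
    exact h
  by_contra hB'
  simp only [not_or, not_exists, not_not, Nat.not_odd_iff_even] at hB'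
  refine h (funext fun x => ?_)
  rw [gram_perm hperm, gram_append, Matrix.add_apply, gram_eq_zero_of_notMem hL₀ hiV,
    gram_map_add_single_apply hB, hB'.2, (ZMod.natCast_eq_zero_iff_even).2 hB'.1]
  simp

/-- The hypothesis says that pivoting at any `i ∈ V` leaves a remainder with zero Gram matrix. -/
theorem exists_cube_eq_of_forall_cube_eq_gram (hL : ∀ v ∈ L, support v ⊆ V) {i₀ : ι}
    (hi₀ : i₀ ∈ V) (h : ∀ i ∈ V, ∀ x y, cube L i x y = gram L x y) :
    ∃ L' : List (ι → ZMod 2), (∀ v ∈ L', support v ⊆ V) ∧ cube L' = cube L ∧ L'.length ≤ 1 := by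
  set c := gram L i₀ i₀
  have hgram : ∀ y ∈ V, ∀ z ∈ V, gram L y z = c := fun y hy z hz =>
    calc gram L y z = cube L i₀ y z := (h i₀ hi₀ y z).symm
      _ = cube L y i₀ z := cube_swap_left ..
      _ = gram L i₀ z := h y hy i₀ z
      _ = cube L z i₀ i₀ := by rw [← cube_self_left, cube_swap_right, cube_swap_left]
      _ = c := h z hz i₀ i₀
  refine ⟨[(↑V : Set ι).indicator fun _ => c], ?_, ?_, by simp⟩
  · simp only [List.mem_singleton, forall_eq]
    exact Set.support_indicator_subset
  funext x y z
  simp only [cube_cons, cube_nil, Pi.zero_apply, add_zero]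
  by_cases hx : x ∉ V
  · simp [hx, cube_eq_zero_of_notMem hL hx]
  by_cases hy : y ∉ V
  · rw [cube_swap_left, cube_eq_zero_of_notMem hL hy]
    simp [hy]
  by_cases hz : z ∉ V
  · rw [cube_swap_right, cube_swap_left, cube_eq_zero_of_notMem hL hz]
    simp [hz]
  simp only [not_not] at hx hy hz
  simp [hx, hy, hz, h x hx, hgram y hy z hz, zmod2_mul_self]

theorem exists_cube_eq_of_pivot (hL : ∀ v ∈ L, support v ⊆ V) (hi : i ∈ V)
    (ih : ∀ R : List (ι → ZMod 2), (∀ v ∈ R, support v ⊆ V.erase i) →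
      ∃ R' : List (ι → ZMod 2), (∀ v ∈ R', support v ⊆ V.erase i) ∧ cube R' = cube R ∧
        R'.length ≤ ((V.erase i).card + 1).choose 2 + 1 ∧
        (Even (V.erase i).card ∨ gram R ≠ 0 → R'.length ≤ ((V.erase i).card + 1).choose 2)) :
    ∃ L' : List (ι → ZMod 2), (∀ v ∈ L', support v ⊆ V) ∧ cube L' = cube L ∧
      L'.length ≤ (V.card + 1).choose 2 + 1 ∧ (Even V.card ∨ gram L i ≠ 0 →
        Odd V.card ∨ (∃ x y, gram L x y ≠ cube L i x y) → L'.length ≤ (V.card + 1).choose 2) := by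
  obtain ⟨A, R, hA, hR, hcube, hgram, hlen, hlen'⟩ := exists_cube_eq_add_cube_erase hL hi
  obtain ⟨R', hR', hcube', hlenR, hlenR'⟩ := ih R hR
  have hcard := Finset.card_erase_add_one hi
  have hchoose : (V.card + 1).choose 2 = V.card + V.card.choose 2 := by
    rw [Nat.choose_succ_succ, Nat.choose_one_right]
  have hpar : Odd V.card → Even (V.erase i).card := by
    rw [← hcard, Nat.odd_add_one, Nat.not_odd_iff_even]
    exact id
  rw [hcard] at hlenR hlenR'
  refine ⟨A ++ R', ?_, by rw [cube_append, hcube', hcube], ?_, fun h₁ h₂ => ?_⟩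
  · simp only [List.mem_append]
    rintro v (hv | hv)
    exacts [hA v hv, (hR' v hv).trans (by simp)]
  · rw [List.length_append]
    rcases Nat.even_or_odd V.card with hV | hV
    · have := hlen' (Or.inl hV)
      omega
    · have := hlenR' (Or.inl (hpar hV))
      omega
  · have := hlen' h₁
    have := hlenR' (h₂.imp hpar fun ⟨x, y, hxy⟩ hR =>
      hxy (CharTwo.add_eq_zero.1 (by rw [← hgram, hR]; rfl)))
    rw [List.length_append]
    omega

theorem exists_cube_eq_length_le (V : Finset ι) :
    ∀ L : List (ι → ZMod 2), (∀ v ∈ L, support v ⊆ V) →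
    ∃ L' : List (ι → ZMod 2), (∀ v ∈ L', support v ⊆ V) ∧ cube L' = cube L ∧
      L'.length ≤ (V.card + 1).choose 2 + 1 ∧
      (Even V.card ∨ gram L ≠ 0 → L'.length ≤ (V.card + 1).choose 2) := by
  induction V using Finset.strongInduction with
  | H V ih =>
  intro L hL
  rcases V.eq_empty_or_nonempty with rfl | ⟨i₀, hi₀⟩
  · refine ⟨[], by simp, ?_, by simp, fun _ => by simp⟩
    funext x y z
    exact (cube_eq_zero_of_notMem hL (Finset.notMem_empty x) y z).symm
  have step := fun i (hi : i ∈ V) => exists_cube_eq_of_pivot hL hi (ih _ (Finset.erase_ssubset hi))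
  rcases Nat.even_or_odd V.card with hV | hV
  · by_cases hpiv : ∃ i ∈ V, ∃ x y, gram L x y ≠ cube L i x y
    · obtain ⟨i, hi, hxy⟩ := hpiv
      obtain ⟨L', h1, h2, h3, h4⟩ := step i hi
      exact ⟨L', h1, h2, h3, fun _ => h4 (Or.inl hV) (Or.inr hxy)⟩
    simp only [not_exists, not_and, ne_eq, not_not] at hpiv
    obtain ⟨L', h1, h2, h3⟩ := exists_cube_eq_of_forall_cube_eq_gram hL hi₀
      fun i hi x y => (hpiv i hi x y).symm
    have := Finset.card_pos.2 ⟨i₀, hi₀⟩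
    have := Nat.choose_pos (show 2 ≤ V.card + 1 by omega)
    exact ⟨L', h1, h2, by omega, fun _ => by omega⟩
  by_cases hG : gram L = 0
  · obtain ⟨L', h1, h2, h3, -⟩ := step i₀ hi₀
    refine ⟨L', h1, h2, h3, fun h => ?_⟩
    rcases h with h | h
    exacts [absurd h (Nat.not_even_iff_odd.2 hV), absurd hG h]
  obtain ⟨i, x, hix⟩ : ∃ i x, gram L i x ≠ 0 := by
    by_contra! h
    exact hG (Matrix.ext h)
  have hi : i ∈ V := by_contra fun hi => hix (gram_eq_zero_of_notMem hL hi x)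
  obtain ⟨L', h1, h2, h3, h4⟩ := step i hi
  exact ⟨L', h1, h2, h3, fun _ => h4 (Or.inr fun h => hix (congrFun h x)) (Or.inl hV)⟩

end Compression

def columns {n m : ℕ} (P : Fin n → Fin m → Bool) : List (Fin n → ZMod 2) :=
  List.ofFn fun j α => if P α j then 1 else 0

lemma natCast_wt_and_and {n m : ℕ} (P : Fin n → Fin m → Bool) (α β γ : Fin n) :
    (wt (fun j => P α j && P β j && P γ j) : ZMod 2) = cube (columns P) α β γ := by
  rw [wt, Finset.card_filter, Nat.cast_sum, cube, columns, List.map_ofFn, List.sum_ofFn]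
  refine Finset.sum_congr rfl fun j _ => ?_
  cases h₁ : P α j <;> cases h₂ : P β j <;> cases h₃ : P γ j <;> simp [h₁, h₂, h₃]

lemma exists_columns_eq {n : ℕ} (L : List (Fin n → ZMod 2)) :
    ∃ P : Fin n → Fin L.length → Bool, columns P = L := by
  refine ⟨fun α j => L[j] α = 1, ?_⟩
  conv_rhs => rw [← List.ofFn_getElem (xs := L)]
  refine congrArg List.ofFn (funext fun j => funext fun α => ?_)
  have h : ∀ a : ZMod 2, (if decide (a = 1) = true then 1 else 0) = a := by decide
  exact h _

end F2Tensor

open F2Tensor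

theorem stmt_11 (n m : ℕ) (P : Fin n → Fin m → Bool) :
    ∃ m' : ℕ, m' ≤ n * (n + 1) / 2 + 1 ∧ ∃ P' : Fin n → Fin m' → Bool,
      ∀ α β γ : Fin n, α ≤ β → β ≤ γ →
        wt (fun i => P' α i && P' β i && P' γ i) % 2 =
        wt (fun i => P α i && P β i && P γ i) % 2 := by
  obtain ⟨L, -, hcube, hlen, -⟩ :=
    exists_cube_eq_length_le Finset.univ (columns P) fun _ _ => by simp
  obtain ⟨P', hP'⟩ := exists_columns_eq L
  refine ⟨L.length, ?_, P', fun α β γ _ _ => ?_⟩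
  · rwa [Finset.card_univ, Fintype.card_fin, Nat.choose_two_right, Nat.add_sub_cancel,
      mul_comm] at hlen
  · rw [← ZMod.natCast_eq_natCast_iff', natCast_wt_and_and, natCast_wt_and_and, hP', hcube]
end

section
/- Let P be an n × m matrix over 𝔽₂ such that |P_α| is even for every α and |P_α ∧ P_β| is even for all α, β, and let Q be an n × m'' Boolean matrix with m, m'' ≥ 1. Then there exists a Boolean matrix W' with strictly fewer than m + m'' columns such that the concatenation W = [P Q] and W' satisfy |W'_α ∧ W'_β ∧ W'_γ| ≡ |W_α ∧ W_β ∧ W_γ| (mod 2) for all α ≤ β ≤ γ. -/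
open Finset

section CubeSum

variable {ι σ R : Type*} [CommRing R]

def cubeSum [Fintype ι] (c : ι → σ → R) (α β γ : σ) : R :=
  ∑ i, c i α * c i β * c i γ

theorem cubeSum_add_const [Fintype ι] {c : ι → σ → R} (hsum : ∑ i, c i = 0)
    (hpair : ∀ α β, ∑ i, c i α * c i β = 0) (z : σ → R) (α β γ : σ) :
    cubeSum (fun i => c i + z) α β γ
      = cubeSum c α β γ + Fintype.card ι * (z α * z β * z γ) := by
  have hsum' : ∀ α, ∑ i, c i α = 0 := fun α => by simpa using congrFun hsum α
  have expand : ∀ i, (c i α + z α) * (c i β + z β) * (c i γ + z γ)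
      = c i α * c i β * c i γ + z γ * (c i α * c i β) + z β * (c i α * c i γ)
        + z α * (c i β * c i γ) + z β * z γ * c i α + z α * z γ * c i β
        + z α * z β * c i γ + z α * z β * z γ := fun i => by ring
  simp only [cubeSum, Pi.add_apply, expand, sum_add_distrib, ← mul_sum, hpair, hsum',
    sum_const, card_univ, nsmul_eq_mul]
  ring

theorem cubeSum_append {a b : ℕ} (c : Fin a → σ → R) (d : Fin b → σ → R) (α β γ : σ) :
    cubeSum (Fin.append c d) α β γ = cubeSum c α β γ + cubeSum d α β γ := by
  simp [cubeSum, Fin.sum_univ_add]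

theorem cubeSum_castSucc {k : ℕ} (c : Fin (k + 1) → σ → R) (α β γ : σ) :
    cubeSum c α β γ
      = cubeSum (fun j : Fin k => c j.castSucc) α β γ
        + c (Fin.last k) α * c (Fin.last k) β * c (Fin.last k) γ := by
  simp [cubeSum, Fin.sum_univ_castSucc]

theorem cubeSum_snoc {k : ℕ} (c : Fin k → σ → R) (x : σ → R) (α β γ : σ) :
    cubeSum (Fin.snoc (α := fun _ => σ → R) c x) α β γ = cubeSum c α β γ + x α * x β * x γ := by
  simp [cubeSum_castSucc]

end CubeSum

section ColumnReduction

variable {σ : Type*} {k l : ℕ}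

def reduceAppend (p : Fin (k + 1) → σ → ZMod 2) (q : Fin (l + 1) → σ → ZMod 2) :
    Fin (k + (l + 1)) → σ → ZMod 2 :=
  let z := q (Fin.last l) - p (Fin.last k)
  Fin.append (fun j => p j.castSucc + z)
    (Fin.snoc (α := fun _ => σ → ZMod 2) (fun j => q j.castSucc) (((k + 1 : ℕ) : ZMod 2) • z))

theorem cubeSum_reduceAppend {p : Fin (k + 1) → σ → ZMod 2} (q : Fin (l + 1) → σ → ZMod 2)
    (hsum : ∑ i, p i = 0) (hpair : ∀ α β, ∑ i, p i α * p i β = 0) (α β γ : σ) :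
    cubeSum (reduceAppend p q) α β γ = cubeSum (Fin.append p q) α β γ := by
  set z := q (Fin.last l) - p (Fin.last k)
  have hlast : p (Fin.last k) + z = q (Fin.last l) := add_sub_cancel _ _
  have hshift := cubeSum_add_const hsum hpair z α β γ
  rw [cubeSum_castSucc] at hshift
  simp only [hlast, Fintype.card_fin] at hshift
  have h2 : (2 : ZMod 2) = 0 := rfl
  have hcube : ∀ x : ZMod 2, x ^ 3 + x = 0 := by decide
  rw [reduceAppend, cubeSum_append, cubeSum_append, cubeSum_snoc, cubeSum_castSucc q]
  simp only [Pi.smul_apply, smul_eq_mul]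
  linear_combination hshift + (z α * z β * z γ) * hcube ((k + 1 : ℕ) : ZMod 2)
    - (q (Fin.last l) α * q (Fin.last l) β * q (Fin.last l) γ) * h2

end ColumnReduction

theorem natCast_wt_s13 {R : Type*} [Semiring R] {k : ℕ} (v : Fin k → Bool) :
    (wt v : R) = ∑ i, ((v i).toNat : R) := by
  have hite : ∀ b : Bool, (if b = true then 1 else 0) = b.toNat := by decide
  simp only [wt, card_filter, hite, Nat.cast_sum]

theorem natCast_toNat_and {R : Type*} [Semiring R] (a b : Bool) :
    ((a && b).toNat : R) = a.toNat * b.toNat := by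
  cases a <;> cases b <;> simp

section BoolMatrix

variable {n k : ℕ}

def zmodCols (M : Fin n → Fin k → Bool) : Fin k → Fin n → ZMod 2 :=
  fun i ρ => (M ρ i).toNat

theorem zmodCols_decide_eq_one (w : Fin k → Fin n → ZMod 2) :
    zmodCols (fun ρ i => decide (w i ρ = 1)) = w := by
  have h : ∀ x : ZMod 2, ((decide (x = 1)).toNat : ZMod 2) = x := by decide
  funext i ρ
  exact h (w i ρ)

theorem zmodCols_addCases {m : ℕ} {P : Fin n → Fin k → Bool} {Q : Fin n → Fin m → Bool}
    {W : Fin n → Fin (k + m) → Bool} (hW : ∀ α j, W α j = Fin.addCases (P α) (Q α) j) :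
    zmodCols W = Fin.append (zmodCols P) (zmodCols Q) := by
  funext j ρ
  refine Fin.addCases (fun j => ?_) (fun j => ?_) j <;> simp [zmodCols, hW]

theorem natCast_wt_and_and (M : Fin n → Fin k → Bool) (α β γ : Fin n) :
    (wt (fun i => M α i && M β i && M γ i) : ZMod 2) = cubeSum (zmodCols M) α β γ := by
  simp only [natCast_wt_s13, natCast_toNat_and, cubeSum, zmodCols]

theorem sum_zmodCols_eq_zero {M : Fin n → Fin k → Bool} (h : ∀ α, wt (fun i => M α i) % 2 = 0) :
    ∑ i, zmodCols M i = 0 := by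
  funext α
  have := (ZMod.natCast_eq_zero_iff _ 2).mpr (Nat.dvd_of_mod_eq_zero (h α))
  simpa [natCast_wt_s13, zmodCols] using this

theorem sum_zmodCols_mul_eq_zero {M : Fin n → Fin k → Bool}
    (h : ∀ α β, wt (fun i => M α i && M β i) % 2 = 0) (α β : Fin n) :
    ∑ i, zmodCols M i α * zmodCols M i β = 0 := by
  have := (ZMod.natCast_eq_zero_iff _ 2).mpr (Nat.dvd_of_mod_eq_zero (h α β))
  simpa [natCast_wt_s13, zmodCols, natCast_toNat_and] using this

end BoolMatrix

theorem stmt_13 (n m m'' : ℕ) (hm : 1 ≤ m) (hm'' : 1 ≤ m'')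
    (P : Fin n → Fin m → Bool) (Q : Fin n → Fin m'' → Bool)
    (hProw : ∀ α, wt (fun i => P α i) % 2 = 0)
    (hPpair : ∀ α β, wt (fun i => P α i && P β i) % 2 = 0)
    (W : Fin n → Fin (m + m'') → Bool)
    (hW : ∀ α j, W α j = Fin.addCases (P α) (Q α) j) :
    ∃ m' : ℕ, m' < m + m'' ∧ ∃ W' : Fin n → Fin m' → Bool,
      ∀ α β γ : Fin n, α ≤ β → β ≤ γ →
        wt (fun i => W' α i && W' β i && W' γ i) % 2 =
        wt (fun i => W α i && W β i && W γ i) % 2 := by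
  obtain ⟨k, rfl⟩ : ∃ k, m = k + 1 := ⟨m - 1, by omega⟩
  obtain ⟨l, rfl⟩ : ∃ l, m'' = l + 1 := ⟨m'' - 1, by omega⟩
  let w' := reduceAppend (zmodCols P) (zmodCols Q)
  refine ⟨k + (l + 1), by omega, fun ρ i => decide (w' i ρ = 1), fun α β γ _ _ => ?_⟩
  rw [← ZMod.natCast_eq_natCast_iff', natCast_wt_and_and (fun ρ i => decide (w' i ρ = 1)),
    natCast_wt_and_and, zmodCols_decide_eq_one, zmodCols_addCases hW]
  exact cubeSum_reduceAppend _ (sum_zmodCols_eq_zero hProw) (sum_zmodCols_mul_eq_zero hPpair) α β γ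
end

section
/- Let n be even, and for vectors a, b ∈ 𝔽₂ⁿ and c, c' ∈ 𝔽₂ⁿ define g(a,b,c) = Σ_{i=0}^{n-1} Σ_{j=0}^{i} a_j b_{i-j} c_i (mod 2) and h(a,b,c') = Σ_{i=0}^{n-2} Σ_{j=i+1}^{n-1} a_j b_{n+i-j} c'_i (mod 2). Writing a_L, a_R for the left/right halves of a (similarly for b, c, c'), one has: g(a,b,c) ⊕ h(a,b,c') = g(a_L⊕a_R, b_L⊕b_R, c_R) ⊕ h(a_L⊕a_R, b_L⊕b_R, c'_L) ⊕ g(a_R, b_R, c'_L⊕c_R) ⊕ h(a_R, b_R, c'_L⊕c'_R) ⊕ g(a_L, b_L, c_L⊕c_R) ⊕ h(a_L, b_L, c'_L⊕c_R). -/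
/-!
Writing `w` for the sequence that is `c` below `n` and `c'` from `n` on, `g + h` is
`∑_{j,l<n} a_j b_l w_{j+l}`: the coefficients of `a(x) b(x)` weighted by `c` in the low half
and by `c'` in the high half. For `n = 2k`, splitting `a` and `b` into halves gives four
quadrants with weights `w_s, w_{k+s}, w_{k+s}, w_{2k+s}`, and in characteristic 2 Karatsuba's
identity `xy w₀ + (xY + Xy) w₁ + XY w₂ = (x+X)(y+Y) w₁ + XY (w₁ + w₂) + xy (w₀ + w₁)` turns them
into three products; the three combined weights are again of the form "low half, high half",
which is what the six terms on the right hand side spell out.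
-/

/-- `g(a,b,c) = ∑_{i=0}^{n-1} ∑_{j=0}^{i} a_j b_{i-j} c_i` over `𝔽₂`. -/
def g (n : ℕ) (a b c : ℕ → ZMod 2) : ZMod 2 :=
  ∑ i ∈ Finset.range n, ∑ j ∈ Finset.range (i + 1), a j * b (i - j) * c i

/-- `h(a,b,c') = ∑_{i=0}^{n-2} ∑_{j=i+1}^{n-1} a_j b_{n+i-j} c'_i` over `𝔽₂`. -/
def h (n : ℕ) (a b c' : ℕ → ZMod 2) : ZMod 2 :=
  ∑ i ∈ Finset.range (n - 1), ∑ j ∈ Finset.Icc (i + 1) (n - 1),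
    a j * b (n + i - j) * c' i

open Finset

def seqAppend {α : Type*} (n : ℕ) (c c' : ℕ → α) (m : ℕ) : α :=
  if m < n then c m else c' (m - n)

section seqAppend

variable {α : Type*} (k : ℕ) (c c' : ℕ → α)

lemma seqAppend_two_mul_add (m : ℕ) :
    seqAppend (2 * k) c c' (k + m) = seqAppend k (fun i => c (k + i)) c' m := by
  unfold seqAppend
  split_ifs <;> first | rfl | omega | exact congrArg c' (by omega)

variable [AddCommMagma α]

lemma seqAppend_split_high (m : ℕ) :
    seqAppend k (fun i => c' i + c (k + i)) (fun i => c' i + c' (k + i)) m =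
      seqAppend (2 * k) c c' (k + m) + seqAppend (2 * k) c c' (2 * k + m) := by
  unfold seqAppend
  beta_reduce
  split_ifs <;> try omega
  · rw [Nat.add_sub_cancel_left, add_comm]
  · rw [Nat.add_sub_cancel_left, show k + m - 2 * k = m - k by omega,
      Nat.add_sub_cancel' (by omega : k ≤ m)]

lemma seqAppend_split_low {m : ℕ} (hm : m < 2 * k) :
    seqAppend k (fun i => c i + c (k + i)) (fun i => c' i + c (k + i)) m =
      seqAppend (2 * k) c c' m + seqAppend (2 * k) c c' (k + m) := by
  unfold seqAppend
  beta_reduce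
  split_ifs <;> try omega
  · rfl
  · rw [show k + m - 2 * k = m - k by omega, Nat.add_sub_cancel' (by omega : k ≤ m), add_comm]

end seqAppend

lemma g_eq_sum_filter (n : ℕ) (a b c : ℕ → ZMod 2) :
    g n a b c = ∑ p ∈ (range n ×ˢ range n).filter (fun p => p.1 + p.2 < n),
      a p.1 * b p.2 * c (p.1 + p.2) := by
  rw [g, sum_sigma']
  refine sum_nbij' (fun p => (p.2, p.1 - p.2)) (fun p => ⟨p.1 + p.2, p.1⟩) ?_ ?_ ?_ ?_ ?_ <;>
    rintro ⟨i, j⟩ hp <;> simp_all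
  omega

lemma h_eq_sum_filter (n : ℕ) (a b c' : ℕ → ZMod 2) :
    h n a b c' = ∑ p ∈ (range n ×ˢ range n).filter (fun p => ¬ p.1 + p.2 < n),
      a p.1 * b p.2 * c' (p.1 + p.2 - n) := by
  rw [h, sum_sigma']
  refine sum_nbij' (fun p => (p.2, n + p.1 - p.2)) (fun p => ⟨p.1 + p.2 - n, p.1⟩)
    ?_ ?_ ?_ ?_ ?_ <;> rintro ⟨i, j⟩ hp <;> simp_all
  all_goals first | omega | exact .inl (congrArg c' (by omega))

lemma g_add_h_eq_sum (n : ℕ) (a b c c' : ℕ → ZMod 2) :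
    g n a b c + h n a b c' =
      ∑ p ∈ range n ×ˢ range n, a p.1 * b p.2 * seqAppend n c c' (p.1 + p.2) := by
  rw [g_eq_sum_filter, h_eq_sum_filter,
    ← sum_filter_add_sum_filter_not (range n ×ˢ range n) (fun p => p.1 + p.2 < n)]
  congr 1 <;> refine sum_congr rfl fun p hp => ?_ <;> rw [seqAppend]
  · rw [if_pos (mem_filter.mp hp).2]
  · rw [if_neg (mem_filter.mp hp).2]

lemma sum_range_two_mul_product {M : Type*} [AddCommMonoid M] (k : ℕ) (f : ℕ → ℕ → M) :
    ∑ p ∈ range (2 * k) ×ˢ range (2 * k), f p.1 p.2 =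
      ∑ p ∈ range k ×ˢ range k,
        (f p.1 p.2 + f p.1 (k + p.2) + f (k + p.1) p.2 + f (k + p.1) (k + p.2)) := by
  simp only [sum_product, two_mul, sum_range_add, sum_add_distrib]
  abel

lemma karatsuba_char_two {R : Type*} [CommRing R] [CharP R 2] (x X y Y w₀ w₁ w₂ : R) :
    x * y * w₀ + x * Y * w₁ + X * y * w₁ + X * Y * w₂ =
      (x + X) * (y + Y) * w₁ + X * Y * (w₁ + w₂) + x * y * (w₀ + w₁) := by
  linear_combination (-(x * y * w₁ + X * Y * w₁)) * CharTwo.two_eq_zero (R := R)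

theorem stmt_14 (n k : ℕ) (hn : n = 2 * k) (a b c c' : ℕ → ZMod 2) :
    g n a b c + h n a b c' =
      g k (fun j => a j + a (k + j)) (fun j => b j + b (k + j)) (fun j => c (k + j))
      + h k (fun j => a j + a (k + j)) (fun j => b j + b (k + j)) (fun j => c' j)
      + g k (fun j => a (k + j)) (fun j => b (k + j)) (fun j => c' j + c (k + j))
      + h k (fun j => a (k + j)) (fun j => b (k + j)) (fun j => c' j + c' (k + j))
      + g k a b (fun j => c j + c (k + j))
      + h k a b (fun j => c' j + c (k + j)) := by
  subst hn
  rw [show ∀ t₁ t₂ t₃ t₄ t₅ t₆ : ZMod 2,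
      t₁ + t₂ + t₃ + t₄ + t₅ + t₆ = (t₁ + t₂) + (t₃ + t₄) + (t₅ + t₆) from
      fun _ _ _ _ _ _ => by ring,
    g_add_h_eq_sum, g_add_h_eq_sum, g_add_h_eq_sum, g_add_h_eq_sum,
    sum_range_two_mul_product k fun i j => a i * b j * seqAppend (2 * k) c c' (i + j),
    ← sum_add_distrib, ← sum_add_distrib]
  refine sum_congr rfl fun ⟨j, l⟩ hp => ?_
  obtain ⟨hj, hl⟩ : j < k ∧ l < k := by simpa using hp
  dsimp only
  rw [show j + (k + l) = k + (j + l) by omega, show k + j + l = k + (j + l) by omega,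
    show k + j + (k + l) = 2 * k + (j + l) by omega, ← seqAppend_two_mul_add,
    seqAppend_split_high, seqAppend_split_low _ _ _ (by omega)]
  exact karatsuba_char_two ..
end

section
/- Let n be even and g, h as above. Then h(a,b,c') = h(a_L⊕a_R, b_L⊕b_R, c'_L) ⊕ g(a_R, b_R, c'_L) ⊕ h(a_R, b_R, c'_L⊕c'_R) ⊕ h(a_L, b_L, c'_L) in 𝔽₂. -/
/-!
Split both indices of `h (2k)` into a left and a right half. Of the four blocks, the one with
`i` right and `j` left is empty (it needs `i < j`), the two diagonal blocks are `h`-terms of the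
halves, and the block with `i` left and `j` right splits, according to `j ≤ i` or `i < j`, into a
`g`-term and an `h`-term. Expanding the right-hand side by trilinearity of `h`, the remaining
terms occur twice and cancel in `𝔽₂`.
-/

open Finset

lemma h_eq_sum_range_ite (n : ℕ) (a b c : ℕ → ZMod 2) :
    h n a b c = ∑ i ∈ range n, ∑ j ∈ range n,
      if i < j then a j * b (n + i - j) * c i else 0 := by
  have Icc_eq_filter (i : ℕ) : Icc (i + 1) (n - 1) = (range n).filter (i < ·) := by
    ext j
    simp only [mem_Icc, mem_filter, mem_range]
    omega
  simp only [h, Icc_eq_filter, sum_filter]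
  refine sum_subset (range_subset_range.2 (n.sub_le 1)) fun i _ hi =>
    sum_eq_zero fun j hj => if_neg ?_
  simp only [mem_range] at hi hj
  omega

lemma g_eq_sum_range_ite (n : ℕ) (a b c : ℕ → ZMod 2) :
    g n a b c = ∑ i ∈ range n, ∑ j ∈ range n,
      if j ≤ i then a j * b (i - j) * c i else 0 := by
  refine sum_congr rfl fun i hi => ?_
  rw [← sum_filter]
  congr 1
  ext j
  simp only [mem_range, mem_filter] at hi ⊢
  omega

lemma h_add_left (n : ℕ) (a a' b c : ℕ → ZMod 2) :
    h n (fun j => a j + a' j) b c = h n a b c + h n a' b c := by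
  simp only [h, add_mul, sum_add_distrib]

lemma h_add_middle (n : ℕ) (a b b' c : ℕ → ZMod 2) :
    h n a (fun j => b j + b' j) c = h n a b c + h n a b' c := by
  simp only [h, mul_add, add_mul, sum_add_distrib]

lemma h_add_right (n : ℕ) (a b c c' : ℕ → ZMod 2) :
    h n a b (fun j => c j + c' j) = h n a b c + h n a b c' := by
  simp only [h, mul_add, sum_add_distrib]

lemma h_two_mul (k : ℕ) (a b c : ℕ → ZMod 2) :
    h (2 * k) a b c =
      h k a (fun j => b (k + j)) c + g k (fun j => a (k + j)) (fun j => b (k + j)) c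
      + h k (fun j => a (k + j)) b c
      + h k (fun j => a (k + j)) (fun j => b (k + j)) (fun j => c (k + j)) := by
  simp only [h_eq_sum_range_ite, g_eq_sum_range_ite, two_mul, sum_range_add, ← sum_add_distrib]
  refine sum_congr rfl fun i hi => sum_congr rfl fun j hj => ?_
  rw [mem_range] at hi hj
  rw [show k + k + i - j = k + (k + i - j) by omega, show k + k + i - (k + j) = k + i - j by omega,
    show k + k + (k + i) - (k + j) = k + (k + i - j) by omega]
  rcases lt_or_ge i j with hij | hji
  · simp [hij, not_le.2 hij, show ¬ k + i < j by omega, show i < k + j by omega]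
  · simp [hji, not_lt.2 hji, show ¬ k + i < j by omega, show i < k + j by omega,
      show k + (i - j) = k + i - j by omega]

theorem stmt_16 (n k : ℕ) (hn : n = 2 * k) (a b c' : ℕ → ZMod 2) :
    h n a b c' =
      h k (fun j => a j + a (k + j)) (fun j => b j + b (k + j)) (fun j => c' j)
      + g k (fun j => a (k + j)) (fun j => b (k + j)) (fun j => c' j)
      + h k (fun j => a (k + j)) (fun j => b (k + j)) (fun j => c' j + c' (k + j))
      + h k a b (fun j => c' j) := by
  subst hn
  rw [h_two_mul, h_add_left, h_add_middle, h_add_middle, h_add_right]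
  linear_combination -(h k a b c' + h k (fun j => a (k + j)) (fun j => b (k + j)) c') *
    (CharTwo.two_eq_zero (R := ZMod 2))
end

section
/- Let n be even and g, h as above. Then g(a,b,c) = g(a_L⊕a_R, b_L⊕b_R, c_R) ⊕ g(a_R, b_R, c_R) ⊕ g(a_L, b_L, c_L⊕c_R) ⊕ h(a_L, b_L, c_R) in 𝔽₂. -/
open Finset

theorem sum_range_sub_split_of_lt {M : Type*} [AddCommMonoid M] (f : ℕ → ℕ → M)
    {k i : ℕ} (hi : i < k) :
    ∑ j ∈ range (k + i + 1), f j (k + i - j) =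
      ∑ j ∈ range (i + 1), f j (k + (i - j)) + ∑ j ∈ Ico (i + 1) k, f j (k + i - j)
        + ∑ j ∈ range (i + 1), f (k + j) (i - j) := by
  rw [add_assoc k, sum_range_add, ← sum_range_add_sum_Ico _ hi]
  congr 2
  · refine sum_congr rfl fun j hj => ?_
    rw [mem_range] at hj
    congr 1
    omega
  · funext j
    congr 1
    omega

theorem h_eq_sum_range_sum_Ico (k : ℕ) (a b c' : ℕ → ZMod 2) :
    h k a b c' = ∑ i ∈ range k, ∑ j ∈ Ico (i + 1) k, a j * b (k + i - j) * c' i := by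
  rcases k with _ | k
  · simp [h]
  · simp only [h, Nat.add_sub_cancel, sum_range_succ _ k, Ico_self, sum_empty, add_zero]
    exact sum_congr rfl fun i _ => by rw [Ico_add_one_right_eq_Icc]

theorem g_two_mul (k : ℕ) (a b c : ℕ → ZMod 2) :
    g (2 * k) a b c = g k a b c + g k a (fun j => b (k + j)) (fun j => c (k + j))
      + g k (fun j => a (k + j)) b (fun j => c (k + j)) + h k a b (fun j => c (k + j)) := by
  simp only [g, h_eq_sum_range_sum_Ico]
  rw [two_mul, sum_range_add]
  simp only [← sum_add_distrib (M := ZMod 2)]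
  refine sum_congr rfl fun i hi => ?_
  have split := sum_range_sub_split_of_lt (fun j l => a j * b l * c (k + i)) (mem_range.mp hi)
  rw [split, sum_add_distrib, sum_add_distrib]
  abel

theorem g_add_left (n : ℕ) (a a' b c : ℕ → ZMod 2) :
    g n (fun j => a j + a' j) b c = g n a b c + g n a' b c := by
  simp only [g, add_mul, sum_add_distrib]

theorem g_add_middle (n : ℕ) (a b b' c : ℕ → ZMod 2) :
    g n a (fun j => b j + b' j) c = g n a b c + g n a b' c := by
  simp only [g, mul_add, add_mul, sum_add_distrib]

theorem g_add_right (n : ℕ) (a b c c' : ℕ → ZMod 2) :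
    g n a b (fun j => c j + c' j) = g n a b c + g n a b c' := by
  simp only [g, mul_add, sum_add_distrib]

theorem stmt_17 (n k : ℕ) (hn : n = 2 * k) (a b c : ℕ → ZMod 2) :
    g n a b c =
      g k (fun j => a j + a (k + j)) (fun j => b j + b (k + j)) (fun j => c (k + j))
      + g k (fun j => a (k + j)) (fun j => b (k + j)) (fun j => c (k + j))
      + g k a b (fun j => c j + c (k + j))
      + h k a b (fun j => c (k + j)) := by
  subst hn
  rw [g_two_mul, g_add_left, g_add_middle, g_add_middle, g_add_right]
  grind
end

section
/- Let P be an n × m matrix over 𝔽₂ and let z ∈ 𝔽₂ⁿ with Hamming weight 1, say z_α = 1 and z_β = 0 for β ≠ α. Let y ∈ 𝔽₂^m satisfy |P_β ∧ P_γ ∧ y| ≡ 0 (mod 2) for all β < γ with β ≠ α ≠ γ, and |P_β ∧ y| ≡ 0 (mod 2) for all β, and |y| ≡ 0 (mod 2). Then P' = P ⊕ z·yᵀ (which differs from P only in row α, where P'_α = P_α ⊕ y) satisfies |P'_{α'} ∧ P'_{β'} ∧ P'_{γ'}| ≡ |P_{α'} ∧ P_{β'} ∧ P_{γ'}| (mod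 2) for all α' ≤ β' ≤ γ'. -/
open Finset
open scoped symmDiff

theorem Finset.card_symmDiff_add_two_mul_card_inter {ι : Type*} [DecidableEq ι]
    (s t : Finset ι) : #(s ∆ t) + 2 * #(s ∩ t) = #s + #t := by
  rw [symmDiff_eq_sup_sdiff_inf, card_sdiff_of_subset inf_le_sup]
  have := card_union_add_card_inter s t
  have := card_le_card (inf_le_sup : s ⊓ t ≤ s ⊔ t)
  simp only [sup_eq_union, inf_eq_inter] at *
  omega

lemma wt_symmDiff_mod_two {m : ℕ} (u w : Fin m → Bool) :
    wt (u ∆ w) % 2 = (wt u + wt w) % 2 := by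
  have hfilter : univ.filter (fun i => (u ∆ w) i = true) =
      univ.filter (fun i => u i = true) ∆ univ.filter (fun i => w i = true) := by
    ext i
    simp only [Pi.symmDiff_apply, Bool.symmDiff_eq_xor, mem_symmDiff, mem_filter, mem_univ, true_and]
    cases u i <;> cases w i <;> decide
  unfold wt
  rw [hfilter, ← card_symmDiff_add_two_mul_card_inter]
  omega

lemma inf_insert_eq_symmDiff_of_update {ι L : Type*} [DecidableEq ι] [BooleanAlgebra L]
    {P P' : ι → L} {α : ι} {y : L} {T : Finset ι} (hαT : α ∉ T) (hPα : P' α = P α ∆ y)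
    (hP : ∀ γ ≠ α, P' γ = P γ) :
    (insert α T).inf P' = (insert α T).inf P ∆ (y ⊓ T.inf P) := by
  rw [inf_insert, inf_insert, hPα, inf_congr rfl fun γ hγ => hP γ (ne_of_mem_of_not_mem hγ hαT),
    inf_symmDiff_distrib_right]

lemma wt_inf_insert_mod_two_of_update {ι : Type*} [DecidableEq ι] {m : ℕ} {α : ι}
    {P P' : ι → Fin m → Bool} {y : Fin m → Bool} {T : Finset ι} (hαT : α ∉ T) (hPα : P' α = P α ∆ y) (hP : ∀ γ ≠ α, P' γ = P γ)
    (heven : wt (y ⊓ T.inf P) % 2 = 0) :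
    wt ((insert α T).inf P') % 2 = wt ((insert α T).inf P) % 2 := by
  rw [inf_insert_eq_symmDiff_of_update hαT hPα hP, wt_symmDiff_mod_two]
  omega

lemma wt_inf_mod_two_eq_zero_of_card_le_two {n m : ℕ} {P : Fin n → Fin m → Bool} {α : Fin n}
    {y : Fin m → Bool} (h1 : wt y % 2 = 0) (h2 : ∀ β, wt (fun i => P β i && y i) % 2 = 0)
    (h3 : ∀ β γ : Fin n, β < γ → β ≠ α → γ ≠ α → wt (fun i => P β i && P γ i && y i) % 2 = 0)
    {T : Finset (Fin n)} (hαT : α ∉ T) (hT : #T ≤ 2) : wt (y ⊓ T.inf P) % 2 = 0 := by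
  have pair (β γ : Fin n) (hβγ : β < γ) (hαT : α ∉ ({β, γ} : Finset _)) :
      wt (y ⊓ ({β, γ} : Finset _).inf P) % 2 = 0 := by
    simp only [mem_insert, mem_singleton, not_or] at hαT
    convert h3 β γ hβγ (Ne.symm hαT.1) (Ne.symm hαT.2) using 3
    ext i; simp [Bool.and_comm]
  obtain hT | hT | hT : #T = 0 ∨ #T = 1 ∨ #T = 2 := by omega
  · simpa [card_eq_zero.mp hT] using h1
  · obtain ⟨β, rfl⟩ := card_eq_one.mp hT
    convert h2 β using 3
    ext i; simp [Bool.and_comm]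
  · obtain ⟨β, γ, hβγ, rfl⟩ := card_eq_two.mp hT
    rcases hβγ.lt_or_gt with hβγ | hγβ
    · exact pair β γ hβγ hαT
    · rw [pair_comm] at hαT ⊢
      exact pair γ β hγβ hαT

theorem stmt_18 (n m : ℕ) (P : Fin n → Fin m → Bool)
    (z : Fin n → Bool) (α : Fin n)
    (hzα : z α = true) (hz : ∀ β, β ≠ α → z β = false)
    (y : Fin m → Bool)
    (h1 : wt y % 2 = 0)
    (h2 : ∀ β, wt (fun i => P β i && y i) % 2 = 0)
    (h3 : ∀ β γ : Fin n, β < γ → β ≠ α → γ ≠ α →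
      wt (fun i => P β i && P γ i && y i) % 2 = 0)
    (P' : Fin n → Fin m → Bool)
    (hP' : ∀ β i, P' β i = Bool.xor (P β i) (z β && y i)) :
    ∀ α' β' γ' : Fin n, α' ≤ β' → β' ≤ γ' →
      wt (fun i => P' α' i && P' β' i && P' γ' i) % 2 =
      wt (fun i => P α' i && P β' i && P γ' i) % 2 := by
  intro a b c _ _
  have hPα : P' α = P α ∆ y := by ext i; simp [hP', hzα, Bool.symmDiff_eq_xor]
  have hP : ∀ β ≠ α, P' β = P β := fun β hβ => by ext i; simp [hP', hz β hβ]
  have triple (Q : Fin n → Fin m → Bool) :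
      (fun i => Q a i && Q b i && Q c i) = ({a, b, c} : Finset _).inf Q := by
    ext i; simp [Bool.and_assoc]
  rw [triple, triple]
  set S : Finset (Fin n) := {a, b, c}
  by_cases hαS : α ∈ S
  · rw [← insert_erase hαS]
    refine wt_inf_insert_mod_two_of_update (notMem_erase α S) hPα hP
      (wt_inf_mod_two_eq_zero_of_card_le_two h1 h2 h3 (notMem_erase α S) ?_)
    have : #S ≤ 3 := card_le_three
    rw [card_erase_of_mem hαS]
    omega
  · rw [inf_congr rfl fun β hβ => hP β (ne_of_mem_of_not_mem hβ hαS)]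
end
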